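/- Let a, h, m_{1,1}, m_{1,2}, m_{2,1}, m_{2,2} lie in a field of characteristic 0 with 2a ≠ 0, h ≠ 0 and a/h ∉ ℤ. For nonnegative integers l₁, l₂ define Z(l₁,l₂) := ((2a + 2h(l₂−l₁))/(2a)) · (−1)^{l₁+l₂} · (∏_{i=1}^{l₁}(m_{1,1}+2h(i−1))(m_{1,2}+2h(i−1)))/(∏_{i=1}^{l₁}(−2a+2hi)(2hi)) · (∏_{i=1}^{l₂}(m_{2,1}+2h(i−1))(m_{2,2}+2h(i−1)))/(∏_{i=1}^{l₂}(2a+2hi)(2hi)). Then in the formal power series ring in z₁, z₂: ∑_{l₁,l₂≥0} Z(l₁,l₂) z₁^{2l₁} z₂^{2l₂} = (1 + (h/(2a))(z₂∂_{z₂} − z₁∂_{z₁})) [ F(m_{1,1}/(2h), m_{1,2}/(2h); 1 − a/h; −z₁²) · F(m_{2,1}/(2h), m_{2,2}/(2h); 1 + a/h; −z₂²) ], where F is the formal Gauss hypergeometric series and ∂_{z} is formal differentiation. -/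

import Mathlib

open Finset

/-- Coefficients of the formal Gauss hypergeometric series
`F(A,B;C;w) = ∑_l (A)_l (B)_l / ((C)_l l!) wˡ`. -/
noncomputable def hypCoeff (F : Type*) [Field F] (A B C : F) (l : ℕ) : F :=
  ((ascPochhammer F l).eval A * (ascPochhammer F l).eval B) /
    ((ascPochhammer F l).eval C * (Nat.factorial l : F))

/-- The single-variable formal power series `F(A,B;C;−z²)` viewed inside the
two-variable formal power series ring, in the variable `v ∈ Fin 2`. -/
noncomputable def hypSq (F : Type*) [Field F] (A B C : F) (v : Fin 2) :
    MvPowerSeries (Fin 2) F :=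
  fun e => if e (1 - v) = 0 ∧ 2 ∣ e v then (-1 : F) ^ (e v / 2) * hypCoeff F A B C (e v / 2)
    else 0

/-- The Euler operator `z_v ∂_{z_v}` on two-variable formal power series. -/
noncomputable def eulerOp (F : Type*) [Field F] (v : Fin 2) (G : MvPowerSeries (Fin 2) F) :
    MvPowerSeries (Fin 2) F :=
  fun e => (e v : F) * G e

/-! Coefficientwise, the operator `1 + (h/2a)(z₂∂_{z₂} − z₁∂_{z₁})` multiplies the coefficient of
`z₁^{2l₁} z₂^{2l₂}` by `1 + h(l₂ − l₁)/a`, which is the prefactor of `Z(l₁,l₂)`; the product of the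
two hypergeometric series in separate variables has coefficient `(-1)^{l₁+l₂} c₁(l₁) c₂(l₂)`.
It remains to recognise each ratio of products in `Z` as a hypergeometric coefficient: dividing
every factor by `2h` turns it into `(A)_l (B)_l / ((C)_l l!)`, and the common power `(2h)^{2l}`
cancels. -/

section Pochhammer

variable {F : Type*} [Field F]

theorem ascPochhammer_eval_eq_prod_range {R : Type*} [CommSemiring R] (x : R) (l : ℕ) :
    (ascPochhammer R l).eval x = ∏ i ∈ range l, (x + i) := by
  induction l with
  | zero => simp
  | succ n ih => rw [ascPochhammer_succ_eval, ih, prod_range_succ]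

theorem prod_range_add_mul_eq_pow_mul_ascPochhammer {s : F} (hs : s ≠ 0) (m : F) (l : ℕ) :
    ∏ i ∈ range l, (m + s * i) = s ^ l * (ascPochhammer F l).eval (m / s) := by
  rw [ascPochhammer_eval_eq_prod_range, ← card_range l, ← prod_const, card_range,
    ← prod_mul_distrib]
  refine prod_congr rfl fun i _ => ?_
  field_simp

theorem prod_Icc_one_eq_prod_range {M : Type*} [CommMonoid M] (f : ℕ → M) (l : ℕ) :
    ∏ i ∈ Icc 1 l, f i = ∏ i ∈ range l, f (i + 1) := by
  rw [range_eq_Ico, prod_Ico_add', zero_add, Ico_add_one_right_eq_Icc]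

theorem hypCoeff_eq_div_prod {s : F} (hs : s ≠ 0) (m₁ m₂ c : F) (l : ℕ) :
    hypCoeff F (m₁ / s) (m₂ / s) (1 + c / s) l =
      (∏ i ∈ range l, ((m₁ + s * i) * (m₂ + s * i))) /
        ∏ i ∈ Icc 1 l, ((c + s * i) * (s * i)) := by
  have hshift : ∀ i ∈ range l, (c + s * ((i + 1 : ℕ) : F)) * (s * ((i + 1 : ℕ) : F)) =
      ((c + s) + s * i) * (s + s * i) := fun i _ => by push_cast; ring
  rw [prod_Icc_one_eq_prod_range, prod_congr rfl hshift]
  simp only [prod_mul_distrib, prod_range_add_mul_eq_pow_mul_ascPochhammer hs]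
  rw [div_self hs, add_div, div_self hs, add_comm, ascPochhammer_eval_one,
    mul_mul_mul_comm (s ^ l) _ (s ^ l), mul_mul_mul_comm (s ^ l) _ (s ^ l),
    mul_div_mul_left _ _ (by positivity), hypCoeff]

end Pochhammer

theorem MvPowerSeries.mul_apply_of_separate_vars {R : Type*} [CommSemiring R]
    (f g : MvPowerSeries (Fin 2) R) (hf : ∀ x : Fin 2 →₀ ℕ, x 1 ≠ 0 → f x = 0)
    (hg : ∀ y : Fin 2 →₀ ℕ, y 0 ≠ 0 → g y = 0) (e : Fin 2 →₀ ℕ) :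
    (f * g) e = f (Finsupp.single 0 (e 0)) * g (Finsupp.single 1 (e 1)) := by
  classical
  refine (coeff_mul e f g).trans (sum_eq_single (Finsupp.single 0 (e 0), Finsupp.single 1 (e 1))
    ?_ fun h => absurd ?_ h)
  · rintro ⟨x, y⟩ hxy hne
    rw [HasAntidiagonal.mem_antidiagonal] at hxy
    rcases eq_or_ne (x 1) 0 with hx | hx
    · rcases eq_or_ne (y 0) 0 with hy | hy
      · refine absurd (Prod.ext ?_ ?_) hne <;> ext i <;> fin_cases i <;> simp [← hxy, hx, hy]
      · exact mul_eq_zero_of_right _ (hg y hy)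
    · exact mul_eq_zero_of_left (hf x hx) _
  · rw [HasAntidiagonal.mem_antidiagonal]
    ext i
    fin_cases i <;> simp

theorem hypSq_mul_hypSq_apply {F : Type*} [Field F] (A B C A' B' C' : F) (e : Fin 2 →₀ ℕ) :
    (hypSq F A B C 0 * hypSq F A' B' C' 1) e =
      if 2 ∣ e 0 ∧ 2 ∣ e 1 then
        (-1 : F) ^ (e 0 / 2 + e 1 / 2) *
          (hypCoeff F A B C (e 0 / 2) * hypCoeff F A' B' C' (e 1 / 2))
      else 0 := by
  rw [MvPowerSeries.mul_apply_of_separate_vars _ _ (fun x hx => by simp [hypSq, hx])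
    (fun y hy => by simp [hypSq, hy])]
  by_cases h0 : 2 ∣ e 0 <;> by_cases h1 : 2 ∣ e 1 <;> simp [hypSq, h0, h1]
  ring

theorem add_C_mul_eulerOp_sub_eulerOp_apply {F : Type*} [Field F] (c : F)
    (G : MvPowerSeries (Fin 2) F) (e : Fin 2 →₀ ℕ) :
    (G + MvPowerSeries.C c * (eulerOp F 1 G - eulerOp F 0 G) : MvPowerSeries (Fin 2) F) e =
      (1 + c * ((e 1 : F) - e 0)) * G e := by
  change G e + MvPowerSeries.coeff e (MvPowerSeries.C c * _) = _
  rw [MvPowerSeries.coeff_C_mul]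
  change G e + c * ((e 1 : F) * G e - e 0 * G e) = _
  ring

theorem orbifold_vortex_even_even_general (F : Type*) [Field F]
    (a h m₁₁ m₁₂ m₂₁ m₂₂ : F) (ha : 2 * a ≠ 0) (hh : h ≠ 0) :
    (fun e : Fin 2 →₀ ℕ =>
        if 2 ∣ e 0 ∧ 2 ∣ e 1 then
          ((2 * a + 2 * h * ((e 1 / 2 : ℕ) - (e 0 / 2 : ℕ) : F)) / (2 * a)) *
            (-1 : F) ^ (e 0 / 2 + e 1 / 2) *
            ((∏ i ∈ Finset.range (e 0 / 2), ((m₁₁ + 2 * h * i) * (m₁₂ + 2 * h * i))) /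
              (∏ i ∈ Finset.Icc 1 (e 0 / 2), ((-(2 * a) + 2 * h * i) * (2 * h * i)))) *
            ((∏ i ∈ Finset.range (e 1 / 2), ((m₂₁ + 2 * h * i) * (m₂₂ + 2 * h * i))) /
              (∏ i ∈ Finset.Icc 1 (e 1 / 2), ((2 * a + 2 * h * i) * (2 * h * i))))
        else 0 : MvPowerSeries (Fin 2) F) =
      (hypSq F (m₁₁ / (2 * h)) (m₁₂ / (2 * h)) (1 - a / h) 0 *
          hypSq F (m₂₁ / (2 * h)) (m₂₂ / (2 * h)) (1 + a / h) 1) +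
        (MvPowerSeries.C (σ := Fin 2) (R := F)) (h / (2 * a)) *
          (eulerOp F 1 (hypSq F (m₁₁ / (2 * h)) (m₁₂ / (2 * h)) (1 - a / h) 0 *
              hypSq F (m₂₁ / (2 * h)) (m₂₂ / (2 * h)) (1 + a / h) 1) -
            eulerOp F 0 (hypSq F (m₁₁ / (2 * h)) (m₁₂ / (2 * h)) (1 - a / h) 0 *
              hypSq F (m₂₁ / (2 * h)) (m₂₂ / (2 * h)) (1 + a / h) 1)) := by
  funext e
  rw [add_C_mul_eulerOp_sub_eulerOp_apply, hypSq_mul_hypSq_apply]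
  split_ifs with hev
  · obtain ⟨⟨l₁, hl₁⟩, ⟨l₂, hl₂⟩⟩ := hev
    have h2 : (2 : F) ≠ 0 := left_ne_zero_of_mul ha
    have hC₁ : 1 + -(2 * a) / (2 * h) = 1 - a / h := by
      rw [neg_div, mul_div_mul_left a h h2, sub_eq_add_neg]
    have hC₂ : 1 + 2 * a / (2 * h) = 1 + a / h := by rw [mul_div_mul_left a h h2]
    rw [← hypCoeff_eq_div_prod (mul_ne_zero h2 hh), ← hypCoeff_eq_div_prod (mul_ne_zero h2 hh),
      hC₁, hC₂, hl₁, hl₂, Nat.mul_div_cancel_left _ two_pos, Nat.mul_div_cancel_left _ two_pos]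
    have hprefactor : (2 * a + 2 * h * ((l₂ : F) - l₁)) / (2 * a) =
        1 + h / (2 * a) * (2 * l₂ - 2 * l₁) := by
      rw [add_div, div_self ha]
      ring
    push_cast
    rw [hprefactor]
    ring
  · simp

/-- The even–even sector of the SU(2) ℤ₂-orbifold vortex partition function (discrete
charge `q_{1,2}=0`, fundamental charges `(0,1)`) equals the differential operator
`1 + (h/(2a))(z₂∂_{z₂} − z₁∂_{z₁})` acting on a product of two Gauss hypergeometric
functions. -/
theorem orbifold_vortex_even_even (F : Type*) [Field F] [CharZero F]
    (a h m₁₁ m₁₂ m₂₁ m₂₂ : F) (ha : 2 * a ≠ 0) (hh : h ≠ 0)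
    (haZ : ∀ n : ℤ, a / h ≠ (n : F)) :
    (fun e : Fin 2 →₀ ℕ =>
        if 2 ∣ e 0 ∧ 2 ∣ e 1 then
          ((2 * a + 2 * h * ((e 1 / 2 : ℕ) - (e 0 / 2 : ℕ) : F)) / (2 * a)) *
            (-1 : F) ^ (e 0 / 2 + e 1 / 2) *
            ((∏ i ∈ Finset.range (e 0 / 2), ((m₁₁ + 2 * h * i) * (m₁₂ + 2 * h * i))) /
              (∏ i ∈ Finset.Icc 1 (e 0 / 2), ((-(2 * a) + 2 * h * i) * (2 * h * i)))) *
            ((∏ i ∈ Finset.range (e 1 / 2), ((m₂₁ + 2 * h * i) * (m₂₂ + 2 * h * i))) /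
              (∏ i ∈ Finset.Icc 1 (e 1 / 2), ((2 * a + 2 * h * i) * (2 * h * i))))
        else 0 : MvPowerSeries (Fin 2) F) =
      (hypSq F (m₁₁ / (2 * h)) (m₁₂ / (2 * h)) (1 - a / h) 0 *
          hypSq F (m₂₁ / (2 * h)) (m₂₂ / (2 * h)) (1 + a / h) 1) +
        (MvPowerSeries.C (σ := Fin 2) (R := F)) (h / (2 * a)) *
          (eulerOp F 1 (hypSq F (m₁₁ / (2 * h)) (m₁₂ / (2 * h)) (1 - a / h) 0 *
              hypSq F (m₂₁ / (2 * h)) (m₂₂ / (2 * h)) (1 + a / h) 1) -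
            eulerOp F 0 (hypSq F (m₁₁ / (2 * h)) (m₁₂ / (2 * h)) (1 - a / h) 0 *
              hypSq F (m₂₁ / (2 * h)) (m₂₂ / (2 * h)) (1 + a / h) 1)) :=
  orbifold_vortex_even_even_general F a h m₁₁ m₁₂ m₂₁ m₂₂ ha hh
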